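/- Let V be a vector space over 𝔽₂ of finite positive dimension endowed with a symplectic form B whose radical is zero, let I be a basis of V, let T be a tree whose line graph is G(I) (via an identification of I with the edges of T), and let u, v be distinct vertices of T. Suppose β, γ ∈ V satisfy: for all α ∈ I, B(α,β) = 1 iff u is incident to α, and B(α,γ) = 1 iff v is incident to α. If α₁,…,α_k are the edges of the path in T joining u and v, then β + γ = α₁ + ⋯ + α_k, and consequently B(β,γ) = 1. -/

import Mathlib

open Module

/-- The transvection with direction `α`, as a linear automorphism of `V`
(over `𝔽₂`, for an alternating form `B` it is an involution). -/
def transvection {V : Type} [AddCommGroup V] [Module (ZMod 2) V]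
    (B : LinearMap.BilinForm (ZMod 2) V) (hB : ∀ v, B v v = 0) (α : V) :
    V ≃ₗ[ZMod 2] V :=
  letI f : V →ₗ[ZMod 2] V :=
    { toFun := fun β => β + B β α • α
      map_add' := fun β γ => by
        simp only [map_add, LinearMap.add_apply, add_smul]
        abel
      map_smul' := fun c β => by
        simp only [map_smul, LinearMap.smul_apply, smul_eq_mul, RingHom.id_apply, smul_add,
          smul_smul] }
  haveI key : ∀ β, f (f β) = β := by
    intro β
    show (β + B β α • α) + B (β + B β α • α) α • α = β
    have h1 : B (β + B β α • α) α = B β α := by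
      simp [map_add, hB α, LinearMap.add_apply, LinearMap.smul_apply]
    rw [h1]
    have h2 : B β α • α + B β α • α = (0 : V) := by
      rw [← add_smul]
      have : B β α + B β α = 0 := by
        have : (2 : ZMod 2) = 0 := by decide
        calc B β α + B β α = 2 * B β α := by ring
        _ = 0 := by rw [this]; ring
      rw [this, zero_smul]
    rw [add_assoc, h2, add_zero]
  LinearEquiv.ofLinear f f (by ext β; exact key β) (by ext β; exact key β)

/-- the subgroup `Tv(S)` generated by the transvections with directions in `S`. -/
def Tv {V : Type} [AddCommGroup V] [Module (ZMod 2) V]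
    (B : LinearMap.BilinForm (ZMod 2) V) (hB : ∀ v, B v v = 0) (S : Set V) :
    Subgroup (V ≃ₗ[ZMod 2] V) :=
  Subgroup.closure ((fun α => transvection B hB α) '' S)

/-- The graph `G(S)`: vertex set `S`, with `α, β` adjacent iff `B α β = 1`. -/
def graphOf {V : Type} [AddCommGroup V] [Module (ZMod 2) V]
    (B : LinearMap.BilinForm (ZMod 2) V) (hB : ∀ v, B v v = 0) (S : Set V) :
    SimpleGraph S where
  Adj a b := B a b = 1
  symm := by
    constructor
    beta_reduce
    intro a b hab
    have h := hB ((a : V) + b)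
    simp only [map_add, LinearMap.add_apply, hB] at h
    -- h : B b a + B a b = 0 (after simp of diagonal terms)
    have h' : B (b : V) a + B (a : V) b = 0 := by
      simpa [hB] using h
    have : B (b : V) a = B (a : V) b := by
      have := eq_neg_of_add_eq_zero_left h'
      rwa [CharTwo.neg_eq] at this
    rw [this]; exact hab
  loopless := by
    constructor
    beta_reduce
    intro a h
    rw [hB] at h
    exact zero_ne_one h

/-- number of connected components of a graph. -/
noncomputable def numComponents {α : Type} (G : SimpleGraph α) : ℕ :=
  Nat.card G.ConnectedComponent

/-- A cut-vertex: a vertex whose deletion increases the number of components. -/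
noncomputable def IsCutVertex {α : Type} (G : SimpleGraph α) (u : α) : Prop :=
  numComponents G < numComponents (G.induce {v | v ≠ u})

/-- A block: a maximal (vertex set of a) connected induced subgraph having no cut-vertex. -/
noncomputable def IsBlock {α : Type} (G : SimpleGraph α) (A : Set α) : Prop :=
  ((G.induce A).Connected ∧ ∀ u, ¬ IsCutVertex (G.induce A) u) ∧
    ∀ A' : Set α, A ⊆ A' → ((G.induce A').Connected ∧ ∀ u, ¬ IsCutVertex (G.induce A') u) →
      A' = A

/-- A block graph: a connected graph all of whose blocks are complete. -/
noncomputable def IsBlockGraph {α : Type} (G : SimpleGraph α) : Prop :=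
  G.Connected ∧ ∀ A : Set α, IsBlock G A → A.Pairwise G.Adj

/-- Claw-free: no induced subgraph isomorphic to `K_{1,3}`. -/
def ClawFree {α : Type} (G : SimpleGraph α) : Prop :=
  IsEmpty (completeBipartiteGraph (Fin 1) (Fin 3) ↪g G)

/-- `G` is (isomorphic to) the line graph of a tree. -/
def IsLineGraphOfTree {α : Type} (G : SimpleGraph α) : Prop :=
  ∃ (W : Type) (T : SimpleGraph W), T.IsTree ∧ Nonempty (G ≃g T.lineGraph)

/-- A path graph: a tree in which every vertex has degree at most two. -/
def IsPathGraph {α : Type} (G : SimpleGraph α) : Prop :=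
  G.IsTree ∧ ∀ v a b c : α, G.Adj v a → G.Adj v b → G.Adj v c → a = b ∨ a = c ∨ b = c

/-- The relation `𝓘₀` on linearly independent subsets of `V`. -/
def IRelZero {V : Type} [AddCommGroup V] [Module (ZMod 2) V]
    (B : LinearMap.BilinForm (ZMod 2) V) (hB : ∀ v, B v v = 0) (S S' : Set V) : Prop :=
  LinearIndependent (ZMod 2) ((↑) : S → V) ∧ LinearIndependent (ZMod 2) ((↑) : S' → V) ∧
    ∃ α ∈ S, ∃ β ∈ S, S' = insert (transvection B hB α β) (S \ {β})

/-- The equivalence relation `𝓘` generated by `𝓘₀`. -/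
def IRel {V : Type} [AddCommGroup V] [Module (ZMod 2) V]
    (B : LinearMap.BilinForm (ZMod 2) V) (hB : ∀ v, B v v = 0) : Set V → Set V → Prop :=
  Relation.EqvGen (IRelZero B hB)

/-!
Pairing with the basis vector `α_f` of an edge `f` detects incidence: by the line-graph condition,
`B(α_f, α_{ab}) = [a ∈ f] + [b ∈ f]` in `𝔽₂` for every edge `ab`, also for `f = ab`, where both
sides vanish. Along the path this telescopes to `B(α_f, α₁ + ⋯ + α_k) = [u ∈ f] + [v ∈ f]`, which is
`B(α_f, β + γ)`; as `I` spans `V` and `B` is nondegenerate, `β + γ = α₁ + ⋯ + α_k`. Finally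
`B(β, γ) = B(β, β + γ) = Σᵢ [u ∈ αᵢ] = 1`, since only the first edge of the path contains `u`.
-/

open SimpleGraph

lemma ZMod.eq_of_eq_one_iff_eq_one {a b : ZMod 2} (h : a = 1 ↔ b = 1) : a = b := by
  revert a b
  decide

section Incidence

variable {W : Type*}

open scoped Classical in
noncomputable def incidence (x : W) (f : Sym2 W) : ZMod 2 := if x ∈ f then 1 else 0

lemma incidence_of_mem {x : W} {f : Sym2 W} (h : x ∈ f) : incidence x f = 1 := if_pos h

lemma incidence_of_notMem {x : W} {f : Sym2 W} (h : x ∉ f) : incidence x f = 0 := if_neg h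

lemma incidence_eq_one_iff {x : W} {f : Sym2 W} : incidence x f = 1 ↔ x ∈ f := by
  by_cases hx : x ∈ f
  · simp [incidence_of_mem hx, hx]
  · simp [incidence_of_notMem hx, hx]

lemma incidence_add_incidence_eq_one_iff {a b : W} (hab : a ≠ b) {f : Sym2 W}
    (hf : f ≠ s(a, b)) :
    incidence a f + incidence b f = 1 ↔ ∃ w, w ∈ f ∧ w ∈ s(a, b) := by
  by_cases ha : a ∈ f <;> by_cases hb : b ∈ f
  · exact absurd ((Sym2.mem_and_mem_iff hab).mp ⟨ha, hb⟩) hf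
  · simp only [incidence_of_mem ha, incidence_of_notMem hb, add_zero, true_iff]
    exact ⟨a, ha, Sym2.mem_mk_left a b⟩
  · simp only [incidence_of_notMem ha, incidence_of_mem hb, zero_add, true_iff]
    exact ⟨b, hb, Sym2.mem_mk_right a b⟩
  · simp only [incidence_of_notMem ha, incidence_of_notMem hb, add_zero, zero_ne_one,
      false_iff, not_exists, not_and, Sym2.mem_iff]
    rintro w hw (rfl | rfl) <;> contradiction

namespace SimpleGraph.Walk

variable {G : SimpleGraph W}

lemma sum_darts_incidence {u v : W} (p : G.Walk u v) (f : Sym2 W) :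
    (p.darts.map fun d => incidence d.fst f + incidence d.snd f).sum =
      incidence u f + incidence v f := by
  induction p with
  | nil => exact (CharTwo.add_self_eq_zero _).symm
  | @cons _ b _ _ _ ih =>
    rw [darts_cons, List.map_cons, List.sum_cons, ih]
    linear_combination CharTwo.add_self_eq_zero (incidence b f)

lemma IsPath.sum_darts_incidence_start {u v : W} {p : G.Walk u v} (hp : p.IsPath)
    (huv : u ≠ v) : (p.darts.map fun d => incidence u d.edge).sum = 1 := by
  cases p with
  | nil => exact absurd rfl huv
  | cons h q =>
    have hu : u ∉ q.support := ((cons_isPath_iff h q).mp hp).2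
    rw [darts_cons, List.map_cons, List.sum_cons, Dart.edge_mk,
      incidence_of_mem (Sym2.mem_mk_left _ _), List.sum_eq_zero, add_zero]
    simp only [List.mem_map]
    rintro _ ⟨d, hd, rfl⟩
    refine incidence_of_notMem fun hmem => hu ?_
    rcases Sym2.mem_iff.mp hmem with h' | h'
    · exact h' ▸ q.dart_fst_mem_support_of_mem_darts hd
    · exact h' ▸ q.dart_snd_mem_support_of_mem_darts hd

lemma IsPath.finsum_edges_eq_sum_darts {ι M : Type*} [AddCommMonoid M] (e : ι ≃ G.edgeSet)
    (g : ι → M) {u v : W} {p : G.Walk u v} (hp : p.IsPath) :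
    ∑ᶠ (i) (_ : (e i : Sym2 W) ∈ p.edges), g i =
      (p.darts.map fun d => g (e.symm ⟨d.edge, d.edge_mem⟩)).sum := by
  classical
  set l := p.darts.map fun d => e.symm ⟨d.edge, d.edge_mem⟩
  have hl : l.Nodup := by
    refine List.Nodup.of_map (fun i => (e i : Sym2 W)) ?_
    simpa [l, List.map_map, Function.comp_def, edges] using hp.edges_nodup
  rw [finsum_cond_eq_sum_of_cond_iff g (t := l.toFinset), List.sum_toFinset g hl, List.map_map]
  · rfl
  · intro i _
    simp [l, edges, e.symm_apply_eq, Subtype.ext_iff]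

end SimpleGraph.Walk

end Incidence

lemma LinearMap.BilinForm.IsAlt.apply_comm {R M : Type*} [CommRing R] [CharP R 2]
    [AddCommGroup M] [Module R M] {B : LinearMap.BilinForm R M} (hB : B.IsAlt) (x y : M) :
    B x y = B y x := by
  rw [← hB.neg_eq, CharTwo.neg_eq]

lemma LinearMap.SeparatingLeft.eq_of_forall_mem_apply_eq {R M : Type*} [CommRing R]
    [AddCommGroup M] [Module R M] {B : LinearMap.BilinForm R M} (hB : B.SeparatingLeft)
    {s : Set M} (hs : Submodule.span R s = ⊤) {x y : M} (h : ∀ a ∈ s, B x a = B y a) :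
    x = y :=
  LinearMap.ker_eq_bot.mp (LinearMap.separatingLeft_iff_ker_eq_bot.mp hB)
    (LinearMap.ext_on hs h)

section EdgeLabelling

variable {V W : Type*} [AddCommGroup V] [Module (ZMod 2) V] {B : LinearMap.BilinForm (ZMod 2) V}
  {I : Set V} {T : SimpleGraph W} {e : I ≃ T.edgeSet}

lemma apply_edgeLabel_eq_incidence_add_incidence (hB : B.IsAlt)
    (he : ∀ a b : I, a ≠ b →
      ((B (a : V) (b : V) = 1) ↔ ∃ u : W, u ∈ (e a : Sym2 W) ∧ u ∈ (e b : Sym2 W)))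
    (α : I) (d : T.Dart) :
    B α (e.symm ⟨d.edge, d.edge_mem⟩) = incidence d.fst (e α) + incidence d.snd (e α) := by
  set α' := e.symm ⟨d.edge, d.edge_mem⟩
  have hα' : (e α' : Sym2 W) = s(d.fst, d.snd) := by simp [α', Dart.edge]
  by_cases hαα' : α = α'
  · rw [hαα', hB, hα', incidence_of_mem (Sym2.mem_mk_left _ _),
      incidence_of_mem (Sym2.mem_mk_right _ _), CharTwo.add_self_eq_zero]
  · have hne : (e α : Sym2 W) ≠ s(d.fst, d.snd) :=
      hα' ▸ fun h => hαα' (e.injective (Subtype.ext h))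
    refine ZMod.eq_of_eq_one_iff_eq_one ((he α α' hαα').trans ?_)
    rw [hα', incidence_add_incidence_eq_one_iff d.adj.ne hne]

end EdgeLabelling

theorem stmt13_general {V W : Type} [AddCommGroup V] [Module (ZMod 2) V]
    (B : LinearMap.BilinForm (ZMod 2) V) (hB : ∀ v, B v v = 0)
    (hrad : ∀ v : V, (∀ w, B v w = 0) → v = 0)
    (I : Set V) (hIspan : Submodule.span (ZMod 2) I = ⊤)
    (T : SimpleGraph W) (e : I ≃ T.edgeSet)
    (he : ∀ a b : I, a ≠ b →
      ((B (a : V) (b : V) = 1) ↔ ∃ u : W, u ∈ (e a : Sym2 W) ∧ u ∈ (e b : Sym2 W)))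
    (u v : W) (huv : u ≠ v) (β γ : V)
    (hβ : ∀ α : I, (B (α : V) β = 1 ↔ u ∈ (e α : Sym2 W)))
    (hγ : ∀ α : I, (B (α : V) γ = 1 ↔ v ∈ (e α : Sym2 W)))
    (p : T.Walk u v) (hp : p.IsPath) :
    (β + γ = ∑ᶠ (α : I) (_ : (e α : Sym2 W) ∈ p.edges), (α : V)) ∧ B (β : V) γ = 1 := by
  have hAlt : B.IsAlt := hB
  set S := (p.darts.map fun d => ((e.symm ⟨d.edge, d.edge_mem⟩ : I) : V)).sum with hS
  have hpair : ∀ α : I, B α S = incidence u (e α) + incidence v (e α) := fun α => by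
    simp only [hS, map_list_sum, List.map_map, Function.comp_def,
      apply_edgeLabel_eq_incidence_add_incidence hAlt he, p.sum_darts_incidence]
  have hdual : ∀ (x : W) (δ : V), (∀ α : I, B α δ = 1 ↔ x ∈ (e α : Sym2 W)) →
      ∀ α : I, B α δ = incidence x (e α) := fun x δ h α =>
    ZMod.eq_of_eq_one_iff_eq_one ((h α).trans incidence_eq_one_iff.symm)
  have hβγ : β + γ = S := LinearMap.SeparatingLeft.eq_of_forall_mem_apply_eq hrad hIspan
    fun α hα => by
      rw [hAlt.apply_comm, hAlt.apply_comm S, map_add, hdual u β hβ ⟨α, hα⟩,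
        hdual v γ hγ ⟨α, hα⟩, hpair ⟨α, hα⟩]
  refine ⟨(hp.finsum_edges_eq_sum_darts e (fun α : I => (α : V))).symm ▸ hβγ, ?_⟩
  calc B β γ = B β (β + γ) := by rw [map_add, hB, zero_add]
    _ = (p.darts.map fun d => incidence u d.edge).sum := by
      rw [hβγ, hS, map_list_sum, List.map_map]
      refine congrArg List.sum (List.map_congr_left fun d _ => ?_)
      rw [Function.comp_apply, hAlt.apply_comm, hdual u β hβ, Equiv.apply_symm_apply]
    _ = 1 := hp.sum_darts_incidence_start huv

/-- radical zero, `I` a basis, `G(I)` the line graph of a tree `T` via `e`,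
`u ≠ v` vertices of `T`, `β, γ ∈ V` the vectors dual to `u, v`; if `p` is the path in `T`
joining `u` and `v`, then `β + γ` is the sum of the elements of `I` whose edges lie on `p`,
and consequently `B β γ = 1`. -/
theorem stmt13 {V W : Type} [AddCommGroup V] [Module (ZMod 2) V] [FiniteDimensional (ZMod 2) V]
    (hdim : 0 < Module.finrank (ZMod 2) V)
    (B : LinearMap.BilinForm (ZMod 2) V) (hB : ∀ v, B v v = 0)
    (hrad : ∀ v : V, (∀ w, B v w = 0) → v = 0)
    (I : Set V) (hI : LinearIndependent (ZMod 2) ((↑) : I → V))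
    (hIspan : Submodule.span (ZMod 2) I = ⊤)
    (T : SimpleGraph W) (hT : T.IsTree)
    (e : I ≃ T.edgeSet)
    (he : ∀ a b : I, a ≠ b →
      ((B (a : V) (b : V) = 1) ↔ ∃ u : W, u ∈ (e a : Sym2 W) ∧ u ∈ (e b : Sym2 W)))
    (u v : W) (huv : u ≠ v) (β γ : V)
    (hβ : ∀ α : I, (B (α : V) β = 1 ↔ u ∈ (e α : Sym2 W)))
    (hγ : ∀ α : I, (B (α : V) γ = 1 ↔ v ∈ (e α : Sym2 W)))
    (p : T.Walk u v) (hp : p.IsPath) :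
    (β + γ = ∑ᶠ (α : I) (_ : (e α : Sym2 W) ∈ p.edges), (α : V)) ∧ B (β : V) γ = 1 :=
  stmt13_general B hB hrad I hIspan T e he u v huv β γ hβ hγ p hp
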